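/- For all x ∈ ℝ^{d_x} and y, v ∈ ℝ^{d_y}: ‖y − y*(x)‖² + ‖v − v*(x)‖² ≤ [1/μ² + (2/μ⁴)(L_{g,2}C_{f_y}/μ + L_{f,1})²]·‖∇_y g(x,y)‖² + (2/μ²)·‖∇_v R(x,y,v)‖². -/

import Mathlib

noncomputable section

open scoped RealInnerProductSpace

variable {dx dy : ℕ}

/-- Partial gradient in the first argument. -/
def gX (f : EuclideanSpace ℝ (Fin dx) → EuclideanSpace ℝ (Fin dy) → ℝ)
    (x : EuclideanSpace ℝ (Fin dx)) (y : EuclideanSpace ℝ (Fin dy)) :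
    EuclideanSpace ℝ (Fin dx) :=
  gradient (fun x' => f x' y) x

/-- Partial gradient in the second argument. -/
def gY (f : EuclideanSpace ℝ (Fin dx) → EuclideanSpace ℝ (Fin dy) → ℝ)
    (x : EuclideanSpace ℝ (Fin dx)) (y : EuclideanSpace ℝ (Fin dy)) :
    EuclideanSpace ℝ (Fin dy) :=
  gradient (fun y' => f x y') y

/-- Second derivative `∇_y∇_y g (x,y)` as a linear map `ℝ^{d_y} → ℝ^{d_y}`. -/
def gYY (g : EuclideanSpace ℝ (Fin dx) → EuclideanSpace ℝ (Fin dy) → ℝ)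
    (x : EuclideanSpace ℝ (Fin dx)) (y : EuclideanSpace ℝ (Fin dy)) :
    EuclideanSpace ℝ (Fin dy) →L[ℝ] EuclideanSpace ℝ (Fin dy) :=
  fderiv ℝ (fun y' => gY g x y') y

/-- `∇_v R(x,y,v) = ∇_y∇_y g(x,y) v − ∇_y f(x,y)`. -/
def gradVR (f g : EuclideanSpace ℝ (Fin dx) → EuclideanSpace ℝ (Fin dy) → ℝ)
    (x : EuclideanSpace ℝ (Fin dx)) (y v : EuclideanSpace ℝ (Fin dy)) :
    EuclideanSpace ℝ (Fin dy) :=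
  gYY g x y v - gY f x y

/-!
Strong convexity of `g x` makes its gradient `μ`-strongly monotone, hence its Hessian
`μ`-coercive. Coercivity turns residuals into distances: `μ‖y - y*‖ ≤ ‖∇_y g(x, y)‖` because
`∇_y g(x, y*) = 0`, and `μ‖v - v̂(x, y)‖ ≤ ‖∇_v R(x, y, v)‖`. Perturbing the linear system
`∇_y∇_y g · v̂ = ∇_y f` shows `μ‖v̂(x, y) - v̂(x, y')‖ ≤ (L_{g,2} C_{f_y} / μ + L_{f,1})‖y - y'‖`,
and `‖v - v*‖² ≤ 2‖v - v̂(x, y)‖² + 2‖v̂(x, y) - v*‖²` assembles the bound.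
-/

open InnerProductSpace Set
open scoped Gradient

lemma StrongConvexOn.mul_sub_le_deriv_sub {φ : ℝ → ℝ} {m : ℝ} (hφ : StrongConvexOn univ m φ)
    (hd : Differentiable ℝ φ) {s t : ℝ} (hst : s ≤ t) :
    m * (t - s) ≤ deriv φ t - deriv φ s := by
  have hderiv : ∀ r, HasDerivAt (fun r => φ r - m / 2 * ‖r‖ ^ 2) (deriv φ r - m * r) r := by
    intro r
    simp only [Real.norm_eq_abs, sq_abs]
    exact ((hd r).hasDerivAt.sub ((hasDerivAt_pow 2 r).const_mul (m / 2))).congr_deriv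
      (by norm_num; ring)
  have hmono := (strongConvexOn_iff_convex.mp hφ).monotoneOn_deriv
    (fun r _ => (hderiv r).differentiableAt) (mem_univ s) (mem_univ t) hst
  rw [(hderiv s).deriv, (hderiv t).deriv] at hmono
  linarith

section InnerProductSpace

variable {E : Type*} [NormedAddCommGroup E] [InnerProductSpace ℝ E]

lemma mul_norm_le_norm_of_mul_sq_le_inner {μ : ℝ} {u w : E} (h : μ * ‖w‖ ^ 2 ≤ ⟪u, w⟫) :
    μ * ‖w‖ ≤ ‖u‖ := by
  rcases (norm_nonneg w).eq_or_lt with hw | hw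
  · rw [← hw, mul_zero]
    exact norm_nonneg u
  · refine le_of_mul_le_mul_right ?_ hw
    calc μ * ‖w‖ * ‖w‖ = μ * ‖w‖ ^ 2 := by ring
      _ ≤ ⟪u, w⟫ := h
      _ ≤ ‖u‖ * ‖w‖ := real_inner_le_norm u w

lemma mul_norm_sub_le_of_coercive {A B : E →L[ℝ] E} {μ : ℝ}
    (hA : ∀ w, μ * ‖w‖ ^ 2 ≤ ⟪A w, w⟫) (u u' : E) :
    μ * ‖u - u'‖ ≤ ‖A u - B u'‖ + ‖A - B‖ * ‖u'‖ :=
  calc μ * ‖u - u'‖ ≤ ‖A (u - u')‖ := mul_norm_le_norm_of_mul_sq_le_inner (hA _)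
    _ = ‖(A u - B u') - (A - B) u'‖ := by
      rw [map_sub, sub_apply]; abel_nf
    _ ≤ ‖A u - B u'‖ + ‖A - B‖ * ‖u'‖ :=
      (norm_sub_le _ _).trans (add_le_add_right ((A - B).le_opNorm u') _)

lemma mul_norm_sub_le_of_coercive_of_lipschitz {F : Type*} [SeminormedAddCommGroup F]
    {A : F → E →L[ℝ] E} {p u : F → E} {μ L₁ L₂ C : ℝ} (hμ : 0 < μ)
    (hA : ∀ y w, μ * ‖w‖ ^ 2 ≤ ⟪A y w, w⟫) (hu : ∀ y, A y (u y) = p y)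
    (hp : ∀ y y', ‖p y - p y'‖ ≤ L₁ * ‖y - y'‖) (hA_lip : ∀ y y', ‖A y - A y'‖ ≤ L₂ * ‖y - y'‖)
    (hp_bdd : ∀ y, ‖p y‖ ≤ C) (y y' : F) :
    μ * ‖u y - u y'‖ ≤ (L₂ * C / μ + L₁) * ‖y - y'‖ := by
  have hu_bdd : ‖u y'‖ ≤ C / μ := by
    rw [le_div_iff₀' hμ]
    exact (mul_norm_le_norm_of_mul_sq_le_inner (hA y' _)).trans (hu y' ▸ hp_bdd y')
  calc μ * ‖u y - u y'‖ ≤ ‖A y (u y) - A y' (u y')‖ + ‖A y - A y'‖ * ‖u y'‖ :=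
        mul_norm_sub_le_of_coercive (hA y) _ _
    _ ≤ L₁ * ‖y - y'‖ + L₂ * ‖y - y'‖ * (C / μ) := by
        rw [hu, hu]
        gcongr
        · exact hp y y'
        · exact (norm_nonneg _).trans (hA_lip y y')
        · exact hA_lip y y'
    _ = (L₂ * C / μ + L₁) * ‖y - y'‖ := by ring

lemma HasFDerivAt.mul_sq_le_inner_apply {F : E → E} {F' : E →L[ℝ] E} {y : E} {μ : ℝ}
    (hF : HasFDerivAt F F' y) (hmono : ∀ z, μ * ‖z - y‖ ^ 2 ≤ ⟪F z - F y, z - y⟫) (w : E) :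
    μ * ‖w‖ ^ 2 ≤ ⟪F' w, w⟫ := by
  have hline : HasDerivAt (fun t : ℝ => y + t • w) w 0 := by
    simpa using ((hasDerivAt_id (0 : ℝ)).smul_const w).const_add y
  have hψ : HasDerivAt (fun t : ℝ => ⟪F (y + t • w), w⟫) ⟪F' w, w⟫ 0 := by
    simpa using (hF.comp_hasDerivAt_of_eq 0 hline (by simp)).inner ℝ (hasDerivAt_const 0 w)
  refine ge_of_tendsto hψ.tendsto_slope_zero_right (eventually_nhdsWithin_of_forall ?_)
  intro t (ht : 0 < t)
  have h := hmono (y + t • w)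
  rw [add_sub_cancel_left, norm_smul, inner_smul_right, Real.norm_of_nonneg ht.le] at h
  rw [zero_add, zero_smul, add_zero, smul_eq_mul, ← inner_sub_left, le_inv_mul_iff₀ ht]
  nlinarith

lemma StrongConvexOn.comp_add_smul {f : E → ℝ} {μ : ℝ} (hf : StrongConvexOn univ μ f) (a d : E) :
    StrongConvexOn univ (μ * ‖d‖ ^ 2) (fun t : ℝ => f (a + t • d)) := by
  refine ⟨convex_univ, fun s _ t _ p q hp hq hpq => ?_⟩
  have h := hf.2 (mem_univ (a + s • d)) (mem_univ (a + t • d)) hp hq hpq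
  have hcomb : p • (a + s • d) + q • (a + t • d) = a + (p • s + q • t) • d := by
    rw [smul_add, smul_add, add_add_add_comm, ← add_smul, hpq, one_smul, smul_smul, smul_smul,
      ← add_smul, smul_eq_mul, smul_eq_mul]
  have hdist : ‖(a + s • d) - (a + t • d)‖ = ‖s - t‖ * ‖d‖ := by
    rw [add_sub_add_left_eq_sub, ← sub_smul, norm_smul]
  rw [hcomb, hdist] at h
  linarith

variable [CompleteSpace E]

lemma StrongConvexOn.mul_sq_le_inner_gradient_sub {f : E → ℝ} {μ : ℝ}
    (hf : StrongConvexOn univ μ f) (hd : Differentiable ℝ f) (a b : E) :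
    μ * ‖b - a‖ ^ 2 ≤ ⟪∇ f b - ∇ f a, b - a⟫ := by
  have hderiv : ∀ t : ℝ, HasDerivAt (fun t : ℝ => f (a + t • (b - a)))
      ⟪∇ f (a + t • (b - a)), b - a⟫ t := fun t =>
    (hd _).hasGradientAt.hasFDerivAt.comp_hasDerivAt t
      (((hasDerivAt_id t).smul_const (b - a)).const_add a) |>.congr_deriv (by simp)
  have h := (hf.comp_add_smul a (b - a)).mul_sub_le_deriv_sub
    (fun t => (hderiv t).differentiableAt) zero_le_one
  rw [(hderiv 0).deriv, (hderiv 1).deriv] at h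
  simpa [inner_sub_left] using h

lemma ContDiff.differentiable_gradient {f : E → ℝ} (hf : ContDiff ℝ 2 f) :
    Differentiable ℝ (∇ f) :=
  ((toDual ℝ E).symm.toContinuousLinearEquiv : StrongDual ℝ E ≃L[ℝ] E).differentiable.comp
    ((hf.fderiv_right le_rfl).differentiable one_ne_zero)

end InnerProductSpace

section PartialGradients

variable {g : EuclideanSpace ℝ (Fin dx) → EuclideanSpace ℝ (Fin dy) → ℝ} {μ : ℝ}
  {x : EuclideanSpace ℝ (Fin dx)}

lemma hasFDerivAt_gY (hg : ContDiff ℝ 2 (Function.uncurry g)) (y : EuclideanSpace ℝ (Fin dy)) :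
    HasFDerivAt (gY g x) (gYY g x y) y :=
  ((hg.comp (contDiff_prodMk_right x)).differentiable_gradient y).hasFDerivAt

lemma mul_sq_le_inner_gYY (hg : ContDiff ℝ 2 (Function.uncurry g))
    (hsc : StrongConvexOn univ μ fun y => g x y) (y w : EuclideanSpace ℝ (Fin dy)) :
    μ * ‖w‖ ^ 2 ≤ ⟪gYY g x y w, w⟫ :=
  (hasFDerivAt_gY hg y).mul_sq_le_inner_apply (fun z => hsc.mul_sq_le_inner_gradient_sub
    ((hg.comp (contDiff_prodMk_right x)).differentiable two_ne_zero) y z) w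

lemma mul_norm_sub_le_norm_gY (hg : ContDiff ℝ 2 (Function.uncurry g))
    (hsc : StrongConvexOn univ μ fun y => g x y) {y₀ : EuclideanSpace ℝ (Fin dy)}
    (hmin : ∀ y, g x y₀ ≤ g x y) (y : EuclideanSpace ℝ (Fin dy)) :
    μ * ‖y - y₀‖ ≤ ‖gY g x y‖ := by
  have hcrit : gY g x y₀ = 0 := by
    have hloc : IsLocalMin (fun y => g x y) y₀ := Filter.Eventually.of_forall hmin
    simp [gY, gradient, hloc.fderiv_eq_zero]
  have h := hsc.mul_sq_le_inner_gradient_sub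
    ((hg.comp (contDiff_prodMk_right x)).differentiable two_ne_zero) y₀ y
  rw [show ∇ (fun y => g x y) y₀ = 0 from hcrit, sub_zero] at h
  exact mul_norm_le_norm_of_mul_sq_le_inner h

end PartialGradients

lemma sq_add_sq_le_of_mul_le {μ K G R a b c d : ℝ} (hμ : 0 < μ)
    (ha : μ * a ≤ G) (hb : μ * b ≤ R) (hc : μ * c ≤ K * a) (hd : d ≤ b + c)
    (ha₀ : 0 ≤ a) (hb₀ : 0 ≤ b) (hc₀ : 0 ≤ c) (hd₀ : 0 ≤ d) :
    a ^ 2 + d ^ 2 ≤ (1 / μ ^ 2 + 2 / μ ^ 4 * K ^ 2) * G ^ 2 + 2 / μ ^ 2 * R ^ 2 := by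
  have sq_le : ∀ {s t : ℝ}, 0 ≤ s → μ * s ≤ t → s ^ 2 ≤ t ^ 2 / μ ^ 2 := fun hs h => by
    rw [le_div_iff₀ (by positivity), ← mul_pow, mul_comm]
    exact pow_le_pow_left₀ (by positivity) h 2
  have hd' : d ^ 2 ≤ 2 * b ^ 2 + 2 * c ^ 2 :=
    (pow_le_pow_left₀ hd₀ hd 2).trans (by nlinarith [sq_nonneg (b - c)])
  calc a ^ 2 + d ^ 2 ≤ G ^ 2 / μ ^ 2 + 2 * (R ^ 2 / μ ^ 2) + 2 * ((K * a) ^ 2 / μ ^ 2) := by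
        linarith [sq_le ha₀ ha, sq_le hb₀ hb, sq_le hc₀ hc]
    _ ≤ G ^ 2 / μ ^ 2 + 2 * (R ^ 2 / μ ^ 2) + 2 * (K ^ 2 * (G ^ 2 / μ ^ 2) / μ ^ 2) := by
        rw [mul_pow]
        gcongr
        exact sq_le ha₀ ha
    _ = (1 / μ ^ 2 + 2 / μ ^ 4 * K ^ 2) * G ^ 2 + 2 / μ ^ 2 * R ^ 2 := by
        field_simp
        ring

theorem gaps_from_gradient_norms_general
    (f g : EuclideanSpace ℝ (Fin dx) → EuclideanSpace ℝ (Fin dy) → ℝ)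
    (hg : ContDiff ℝ 2 (Function.uncurry g))
    (μ Lf1 Lg2 Cfy : ℝ) (hμ : 0 < μ)
    (hsc : ∀ x, StrongConvexOn Set.univ μ (fun y => g x y))
    (hfy_lip : ∀ x₁ y₁ x₂ y₂, ‖gY f x₁ y₁ - gY f x₂ y₂‖ ≤ Lf1 * (‖x₁ - x₂‖ + ‖y₁ - y₂‖))
    (hgyy_lip : ∀ x₁ y₁ x₂ y₂, ‖gYY g x₁ y₁ - gYY g x₂ y₂‖ ≤ Lg2 * (‖x₁ - x₂‖ + ‖y₁ - y₂‖))
    (hfy_bd : ∀ x y, ‖gY f x y‖ ≤ Cfy)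
    (ystar : EuclideanSpace ℝ (Fin dx) → EuclideanSpace ℝ (Fin dy))
    (hystar : ∀ x y, g x (ystar x) ≤ g x y)
    (vhat : EuclideanSpace ℝ (Fin dx) → EuclideanSpace ℝ (Fin dy) → EuclideanSpace ℝ (Fin dy))
    (hvhat : ∀ x y, gYY g x y (vhat x y) = gY f x y) :
    ∀ x y v,
      ‖y - ystar x‖ ^ 2 + ‖v - vhat x (ystar x)‖ ^ 2
        ≤ (1 / μ ^ 2 + (2 / μ ^ 4) * (Lg2 * Cfy / μ + Lf1) ^ 2) * ‖gY g x y‖ ^ 2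
          + (2 / μ ^ 2) * ‖gradVR f g x y v‖ ^ 2 := by
  intro x y v
  have hH := mul_sq_le_inner_gYY hg (hsc x)
  have hy : μ * ‖y - ystar x‖ ≤ ‖gY g x y‖ := mul_norm_sub_le_norm_gY hg (hsc x) (hystar x) y
  have hv : μ * ‖v - vhat x y‖ ≤ ‖gradVR f g x y v‖ := by
    refine mul_norm_le_norm_of_mul_sq_le_inner ((hH y _).trans_eq ?_)
    rw [map_sub, hvhat]
    rfl
  have hvhat_lip : μ * ‖vhat x y - vhat x (ystar x)‖ ≤ (Lg2 * Cfy / μ + Lf1) * ‖y - ystar x‖ :=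
    mul_norm_sub_le_of_coercive_of_lipschitz hμ hH (hvhat x)
      (fun y y' => by simpa using hfy_lip x y x y') (fun y y' => by simpa using hgyy_lip x y x y')
      (hfy_bd x) y (ystar x)
  exact sq_add_sq_le_of_mul_le hμ hy hv hvhat_lip (norm_sub_le_norm_sub_add_norm_sub _ _ _)
    (norm_nonneg _) (norm_nonneg _) (norm_nonneg _) (norm_nonneg _)

/-- the approximation gaps are controlled by the gradient norms
`‖∇_y g(x,y)‖` and `‖∇_v R(x,y,v)‖`. -/
theorem gaps_from_gradient_norms
    (f g : EuclideanSpace ℝ (Fin dx) → EuclideanSpace ℝ (Fin dy) → ℝ)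
    (hf : ContDiff ℝ 2 (Function.uncurry f)) (hg : ContDiff ℝ 2 (Function.uncurry g))
    (μ Lf1 Lg2 Cfy : ℝ) (hμ : 0 < μ)
    (hsc : ∀ x, StrongConvexOn Set.univ μ (fun y => g x y))
    (hfx_lip : ∀ x₁ y₁ x₂ y₂, ‖gX f x₁ y₁ - gX f x₂ y₂‖ ≤ Lf1 * (‖x₁ - x₂‖ + ‖y₁ - y₂‖))
    (hfy_lip : ∀ x₁ y₁ x₂ y₂, ‖gY f x₁ y₁ - gY f x₂ y₂‖ ≤ Lf1 * (‖x₁ - x₂‖ + ‖y₁ - y₂‖))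
    (hgyy_lip : ∀ x₁ y₁ x₂ y₂, ‖gYY g x₁ y₁ - gYY g x₂ y₂‖ ≤ Lg2 * (‖x₁ - x₂‖ + ‖y₁ - y₂‖))
    (hfy_bd : ∀ x y, ‖gY f x y‖ ≤ Cfy)
    (ystar : EuclideanSpace ℝ (Fin dx) → EuclideanSpace ℝ (Fin dy))
    (hystar : ∀ x y, g x (ystar x) ≤ g x y)
    (vhat : EuclideanSpace ℝ (Fin dx) → EuclideanSpace ℝ (Fin dy) → EuclideanSpace ℝ (Fin dy))
    (hvhat : ∀ x y, gYY g x y (vhat x y) = gY f x y) :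
    ∀ x y v,
      ‖y - ystar x‖ ^ 2 + ‖v - vhat x (ystar x)‖ ^ 2
        ≤ (1 / μ ^ 2 + (2 / μ ^ 4) * (Lg2 * Cfy / μ + Lf1) ^ 2) * ‖gY g x y‖ ^ 2
          + (2 / μ ^ 2) * ‖gradVR f g x y v‖ ^ 2 :=
  gaps_from_gradient_norms_general f g hg μ Lf1 Lg2 Cfy hμ hsc hfy_lip hgyy_lip hfy_bd ystar hystar
    vhat hvhat
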